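/- Fix c > 0 and β > 0, and for integers n ≥ 0 let M_n(β,c) = 2·∫₀¹ exp(−c·(1−r)^{−β})·r^{2n+1} dr, and put β̃ = β/(β+1). Then there exist d > 0 and N such that for all n ≥ N, exp(−2d·n^{β̃}) ≤ M_n(β,c) ≤ exp(−d·n^{β̃}); moreover d can be taken of the form d = κ·c^{1/(β+1)} with κ > 0 depending only on β. -/

import Mathlib

open MeasureTheory Set Filter
open scoped Real ENNReal Topology

/-!
With `s = 1 - r` and `r ≤ exp (-s)`, the integrand of the `m`-th moment is at most
`exp (-(c * s ^ (-β) + A * s))` for `A ≤ m`. By convexity of `s ^ (-β)`, this exponent is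
minimised at `t = (β c / A) ^ (1 / (β + 1))`, with minimum
`Φ(A) = (β + 1) / β * (β c) ^ (1 / (β + 1)) * A ^ (β / (β + 1))`; hence `Mₙ ≤ 2 exp (-Φ(2n))`.
Conversely, restricting the integral to `s ∈ [θ t, t]` with `θ ^ (-β) = 3 / 2` costs a factor
`3 / 2` on the term `c * s ^ (-β)`, while `(1 - t) ^ m` and the length `(1 - θ) t` of the interval
only cost lower-order terms, so `Mₙ ≥ exp (-(3 / 2) Φ(2n))`. Both bounds have the claimed form with
`κ c ^ (1 / (β + 1)) n ^ (β / (β + 1)) = (3 / 4) Φ(2n)`.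
-/

noncomputable section

def momentT1 (β c : ℝ) (n : ℕ) : ℝ :=
  2 * ∫ r in Set.Ioo (0:ℝ) 1, Real.exp (-c * (1 - r) ^ (-β)) * r ^ (2 * n + 1)

theorem one_add_sub_mul_le_rpow_neg {β x : ℝ} (hβ : 0 ≤ β) (hx : 0 < x) :
    1 + β - β * x ≤ x ^ (-β) := by
  have h := one_add_mul_self_le_rpow_one_add (s := x⁻¹ - 1) (by linarith [inv_pos.2 hx])
    (p := β + 1) (by linarith)
  rw [add_sub_cancel, Real.rpow_add_one (inv_pos.2 hx).ne', Real.inv_rpow hx.le,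
    ← Real.rpow_neg hx.le] at h
  calc 1 + β - β * x = (1 + (β + 1) * (x⁻¹ - 1)) * x := by field_simp; ring
    _ ≤ x ^ (-β) * x⁻¹ * x := mul_le_mul_of_nonneg_right h hx.le
    _ = x ^ (-β) := by field_simp

theorem tendsto_mul_exp_neg_mul_rpow_atTop {γ b : ℝ} (hγ : 0 < γ) (hb : 0 < b) :
    Tendsto (fun x : ℝ => x * Real.exp (-(b * x ^ γ))) atTop (𝓝 0) := by
  refine ((tendsto_rpow_mul_exp_neg_mul_atTop_nhds_zero γ⁻¹ b hb).comp
    (tendsto_rpow_atTop hγ)).congr' ?_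
  filter_upwards [eventually_ge_atTop 0] with x hx
  simp only [Function.comp_apply, ← Real.rpow_mul hx, mul_inv_cancel₀ hγ.ne', Real.rpow_one,
    neg_mul]

/-- For `β, c, A > 0`, `critPoint β c A` minimises `s ↦ c * s ^ (-β) + A * s` on `(0, ∞)`
and `critValue β c A` is the minimum. -/
def critPoint (β c A : ℝ) : ℝ := (β * c / A) ^ (1 / (β + 1))

def critValue (β c A : ℝ) : ℝ := c * critPoint β c A ^ (-β) + A * critPoint β c A

section critPoint

variable {β c A : ℝ}

theorem critPoint_pos (hβ : 0 < β) (hc : 0 < c) (hA : 0 < A) : 0 < critPoint β c A := by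
  unfold critPoint; positivity

theorem mul_critPoint (hβ : 0 < β) (hc : 0 < c) (hA : 0 < A) :
    A * critPoint β c A = β * c * critPoint β c A ^ (-β) := by
  have ht := critPoint_pos hβ hc hA
  have hpow : critPoint β c A ^ β * critPoint β c A = β * c / A := by
    rw [← Real.rpow_add_one ht.ne', critPoint, ← Real.rpow_mul (by positivity),
      one_div_mul_cancel (by positivity), Real.rpow_one]
  rw [Real.rpow_neg ht.le]
  have : 0 < critPoint β c A ^ β := by positivity
  field_simp
  rw [eq_div_iff hA.ne'] at hpow
  linear_combination hpow

theorem critValue_eq_mul_critPoint (hβ : 0 < β) (hc : 0 < c) (hA : 0 < A) :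
    critValue β c A = (β + 1) / β * (A * critPoint β c A) := by
  rw [critValue, mul_critPoint hβ hc hA]
  field_simp
  ring

theorem mul_critPoint_eq_rpow (hβ : 0 < β) (hc : 0 < c) (hA : 0 < A) :
    A * critPoint β c A = (β * c) ^ (1 / (β + 1)) * A ^ (β / (β + 1)) := by
  have hexp : 1 - 1 / (β + 1) = β / (β + 1) := by field_simp; ring
  rw [critPoint, Real.div_rpow (by positivity) hA.le, mul_div_left_comm,
    ← Real.rpow_one_sub' hA.le (by rw [hexp]; positivity), hexp]

theorem critValue_le (hβ : 0 < β) (hc : 0 < c) (hA : 0 < A) {s : ℝ} (hs : 0 < s) :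
    critValue β c A ≤ c * s ^ (-β) + A * s := by
  have hAs : β * c * critPoint β c A ^ (-β) * (s / critPoint β c A) = A * s := by
    rw [← mul_critPoint hβ hc hA]; field_simp [(critPoint_pos hβ hc hA).ne']
  rw [critValue_eq_mul_critPoint hβ hc hA, mul_critPoint hβ hc hA]
  set t := critPoint β c A
  have ht : 0 < t := critPoint_pos hβ hc hA
  have key := one_add_sub_mul_le_rpow_neg hβ.le (div_pos hs ht)
  rw [Real.div_rpow hs.le ht.le, le_div_iff₀ (by positivity)] at key
  field_simp
  nlinarith [mul_le_mul_of_nonneg_left key hc.le]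

theorem critValue_eq_rpow (hβ : 0 < β) (hc : 0 < c) (hA : 0 < A) :
    critValue β c A = (β + 1) / β * (β * c) ^ (1 / (β + 1)) * A ^ (β / (β + 1)) := by
  rw [critValue_eq_mul_critPoint hβ hc hA, mul_critPoint_eq_rpow hβ hc hA, mul_assoc]

theorem tendsto_critPoint_atTop (hβ : 0 < β) (c : ℝ) : Tendsto (critPoint β c) atTop (𝓝 0) := by
  have h := ((Real.continuousAt_rpow_const 0 (1 / (β + 1)) (Or.inr (by positivity))).tendsto).comp
    ((tendsto_const_nhds (x := β * c)).div_atTop tendsto_id)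
  rwa [Real.zero_rpow (by positivity)] at h

theorem tendsto_critValue_atTop (hβ : 0 < β) (hc : 0 < c) :
    Tendsto (critValue β c) atTop atTop := by
  refine ((tendsto_rpow_atTop (y := β / (β + 1)) (by positivity)).const_mul_atTop
    (r := (β + 1) / β * (β * c) ^ (1 / (β + 1))) (by positivity)).congr' ?_
  filter_upwards [eventually_gt_atTop 0] with A hA
  exact (critValue_eq_rpow hβ hc hA).symm

end critPoint

section integral

variable {β c : ℝ}

theorem integrableOn_moment_integrand (hc : 0 ≤ c) (m : ℕ) :
    IntegrableOn (fun r : ℝ => Real.exp (-c * (1 - r) ^ (-β)) * r ^ m) (Ioo 0 1) := by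
  refine Integrable.mono' (g := fun _ => 1) (integrableOn_const measure_Ioo_lt_top.ne (by simp))
    (by fun_prop) ?_
  filter_upwards [ae_restrict_mem measurableSet_Ioo] with r ⟨hr0, hr1⟩
  have hexp : Real.exp (-c * (1 - r) ^ (-β)) ≤ 1 := by
    rw [Real.exp_le_one_iff, neg_mul, neg_nonpos]
    exact mul_nonneg hc (Real.rpow_nonneg (by linarith) _)
  rw [Real.norm_of_nonneg (by positivity)]
  exact mul_le_one₀ hexp (pow_nonneg hr0.le _) (pow_le_one₀ hr0.le hr1.le)

theorem integral_moment_integrand_le_exp_neg_critValue (hβ : 0 < β) (hc : 0 < c) {A : ℝ}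
    (hA : 0 < A) {m : ℕ} (hAm : A ≤ m) :
    ∫ r in Ioo 0 1, Real.exp (-c * (1 - r) ^ (-β)) * r ^ m ≤ Real.exp (-critValue β c A) := by
  have hpt : ∀ r ∈ Ioo (0:ℝ) 1,
      Real.exp (-c * (1 - r) ^ (-β)) * r ^ m ≤ Real.exp (-critValue β c A) := by
    rintro r ⟨hr0, hr1⟩
    have hr : r ^ m ≤ Real.exp (-(A * (1 - r))) :=
      calc r ^ m ≤ Real.exp (-(1 - r)) ^ m :=
            pow_le_pow_left₀ hr0.le (by linarith [Real.add_one_le_exp (-(1 - r))]) m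
        _ = Real.exp (-(m * (1 - r))) := by rw [← Real.exp_nat_mul]; ring_nf
        _ ≤ Real.exp (-(A * (1 - r))) := by gcongr
    calc Real.exp (-c * (1 - r) ^ (-β)) * r ^ m
        ≤ Real.exp (-c * (1 - r) ^ (-β)) * Real.exp (-(A * (1 - r))) := by gcongr
      _ = Real.exp (-(c * (1 - r) ^ (-β) + A * (1 - r))) := by rw [← Real.exp_add]; ring_nf
      _ ≤ Real.exp (-critValue β c A) := by
          gcongr; exact critValue_le hβ hc hA (by linarith)
  have h := setIntegral_mono_on (integrableOn_moment_integrand hc.le m)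
    (integrableOn_const measure_Ioo_lt_top.ne (by simp)) measurableSet_Ioo hpt
  simpa [setIntegral_const, measureReal_def, Real.volume_Ioo] using h

theorem exp_neg_le_one_sub_pow {t : ℝ} (ht1 : t < 1) (m : ℕ) :
    Real.exp (-(m * (t / (1 - t)))) ≤ (1 - t) ^ m := by
  have h := Real.one_sub_inv_le_log_of_pos (x := 1 - t) (by linarith)
  rw [← Real.exp_log (pow_pos (by linarith : 0 < 1 - t) m), Real.log_pow]
  have h' : -(t / (1 - t)) ≤ Real.log (1 - t) :=
    calc -(t / (1 - t)) = 1 - (1 - t)⁻¹ := by field_simp [(by linarith : 1 - t ≠ 0)]; ring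
      _ ≤ _ := h
  rw [Real.exp_le_exp, ← mul_neg]
  exact mul_le_mul_of_nonneg_left h' m.cast_nonneg

theorem le_integral_moment_integrand (hβ : 0 ≤ β) (hc : 0 ≤ c) {θ t : ℝ} (hθ0 : 0 < θ)
    (hθ1 : θ < 1) (ht0 : 0 < t) (ht1 : t < 1) (m : ℕ) :
    (1 - θ) * t * Real.exp (-c * (θ * t) ^ (-β)) * (1 - t) ^ m
      ≤ ∫ r in Ioo 0 1, Real.exp (-c * (1 - r) ^ (-β)) * r ^ m := by
  have hsub : Ioc (1 - t) (1 - θ * t) ⊆ Ioo 0 1 := fun r ⟨h1, h2⟩ =>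
    ⟨by linarith, by nlinarith⟩
  have hpt : ∀ r ∈ Ioc (1 - t) (1 - θ * t),
      Real.exp (-c * (θ * t) ^ (-β)) * (1 - t) ^ m
        ≤ Real.exp (-c * (1 - r) ^ (-β)) * r ^ m := by
    rintro r ⟨h1, h2⟩
    have hθt : 0 < θ * t := by positivity
    have hrpow : (1 - r) ^ (-β) ≤ (θ * t) ^ (-β) :=
      Real.rpow_le_rpow_of_nonpos hθt (by linarith) (neg_nonpos.2 hβ)
    refine mul_le_mul (Real.exp_le_exp.2 ?_) (pow_le_pow_left₀ (by linarith) (by linarith) m)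
      (by positivity) (by positivity)
    nlinarith
  have hvol : volume.real (Ioc (1 - t) (1 - θ * t)) = (1 - θ) * t := by
    rw [Real.volume_real_Ioc_of_le (by nlinarith)]; ring
  calc (1 - θ) * t * Real.exp (-c * (θ * t) ^ (-β)) * (1 - t) ^ m
      ≤ ∫ r in Ioc (1 - t) (1 - θ * t), Real.exp (-c * (1 - r) ^ (-β)) * r ^ m := by
        have := setIntegral_ge_of_const_le measurableSet_Ioc measure_Ioc_lt_top.ne hpt
          ((integrableOn_moment_integrand hc m).mono_set hsub)
        rw [hvol, smul_eq_mul] at this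
        linarith
    _ ≤ ∫ r in Ioo 0 1, Real.exp (-c * (1 - r) ^ (-β)) * r ^ m := by
        refine setIntegral_mono_set (integrableOn_moment_integrand hc m) ?_ hsub.eventuallyLE
        filter_upwards [ae_restrict_mem measurableSet_Ioo] with r hr
        have := hr.1.le
        positivity

theorem eventually_exp_neg_le_integral_moment_integrand (hβ : 0 < β) (hc : 0 < c) :
    ∀ᶠ A in atTop, ∀ m : ℕ, (m : ℝ) ≤ 11 / 10 * A →
      Real.exp (-(3 / 2 * critValue β c A))
        ≤ ∫ r in Ioo 0 1, Real.exp (-c * (1 - r) ^ (-β)) * r ^ m := by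
  set θ : ℝ := (2 / 3) ^ (1 / β)
  have hθ0 : 0 < θ := by positivity
  have hθ1 : θ < 1 := Real.rpow_lt_one (by norm_num) (by norm_num) (by positivity)
  have hθβ : θ ^ (-β) = 3 / 2 := by
    rw [← Real.rpow_mul (by norm_num), one_div_mul_eq_div, neg_div, div_self hβ.ne',
      Real.rpow_neg_one]
    norm_num
  have hsmall : ∀ᶠ A in atTop, A * Real.exp (-(A * critPoint β c A / 4)) < 1 - θ := by
    refine ((tendsto_mul_exp_neg_mul_rpow_atTop (γ := β / (β + 1))
      (b := (β * c) ^ (1 / (β + 1)) / 4) (by positivity) (by positivity)).congr' ?_)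
      |>.eventually_lt_const (by linarith)
    filter_upwards [eventually_gt_atTop 0] with A hA
    rw [mul_critPoint_eq_rpow hβ hc hA]; ring_nf
  filter_upwards [eventually_gt_atTop 0, hsmall,
    (tendsto_critPoint_atTop hβ c).eventually_le_const (by norm_num : (0:ℝ) < 1 / 12),
    (tendsto_critValue_atTop hβ hc).eventually_ge_atTop ((β + 1) / β)]
    with A hA hsmall ht hΦ m hm
  set t := critPoint β c A
  have ht0 : 0 < t := critPoint_pos hβ hc hA
  have hAt : A * t = β * c * t ^ (-β) := mul_critPoint hβ hc hA
  have hval : critValue β c A = A * t + A * t / β := by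
    rw [critValue_eq_mul_critPoint hβ hc hA]; field_simp; ring
  have hu : 1 ≤ A * t := by
    rw [critValue_eq_mul_critPoint hβ hc hA] at hΦ
    exact (le_mul_iff_one_le_right (by positivity)).1 hΦ
  have hcθt : c * (θ * t) ^ (-β) = 3 / 2 * (A * t / β) := by
    rw [Real.mul_rpow hθ0.le ht0.le, hθβ, hAt]
    field_simp
  have hmt : m * (t / (1 - t)) ≤ 6 / 5 * (A * t) := by
    rw [mul_div_assoc', div_le_iff₀ (by linarith)]
    nlinarith
  have hθt : Real.exp (-(A * t / 4)) ≤ (1 - θ) * t := by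
    rw [← mul_le_mul_iff_of_pos_left hA]
    nlinarith
  -- the losses `1 / 4` (interval length) and `6 / 5` (from `(1 - t) ^ m`) fit under `3 / 2`
  calc Real.exp (-(3 / 2 * critValue β c A))
      ≤ Real.exp (-(A * t / 4)) * Real.exp (-c * (θ * t) ^ (-β) - m * (t / (1 - t))) := by
        rw [← Real.exp_add, Real.exp_le_exp, neg_mul, hcθt, hval]
        linarith
    _ ≤ (1 - θ) * t * Real.exp (-c * (θ * t) ^ (-β)) * (1 - t) ^ m := by
        rw [sub_eq_add_neg, Real.exp_add, ← mul_assoc]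
        gcongr
        exact exp_neg_le_one_sub_pow (by linarith) m
    _ ≤ _ := le_integral_moment_integrand hβ.le hc.le hθ0 hθ1 ht0 (by linarith) m

end integral

/-- **Moment estimates for the weights exp(-c(1-|z|)^{-β}).** With β̃ = β/(β+1),
exp(-2d n^β̃) ≤ Mₙ(β,c) ≤ exp(-d n^β̃) for large n, where d = κ c^{1/(β+1)} and
κ > 0 depends only on β. -/
theorem momentT1_estimates (β : ℝ) (hβ : 0 < β) :
    ∃ κ > (0:ℝ), ∀ c > (0:ℝ), ∃ N : ℕ, ∀ n ≥ N,
      Real.exp (-2 * (κ * c ^ (1 / (β + 1))) * (n : ℝ) ^ (β / (β + 1)))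
          ≤ momentT1 β c n ∧
        momentT1 β c n
          ≤ Real.exp (-(κ * c ^ (1 / (β + 1))) * (n : ℝ) ^ (β / (β + 1))) := by
  set κ := 3 / 4 * ((β + 1) / β * β ^ (1 / (β + 1)) * 2 ^ (β / (β + 1)))
  refine ⟨κ, by positivity, fun c hc => ?_⟩
  have h2n : Tendsto (fun n : ℕ => 2 * (n : ℝ)) atTop atTop :=
    tendsto_natCast_atTop_atTop.const_mul_atTop two_pos
  obtain ⟨N, hN⟩ := eventually_atTop.1 <|
    (h2n.eventually (eventually_exp_neg_le_integral_moment_integrand hβ hc)).and <|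
    (h2n.eventually ((tendsto_critValue_atTop hβ hc).eventually_ge_atTop (4 * Real.log 2))).and
    (eventually_ge_atTop 5)
  refine ⟨N, fun n hn => ?_⟩
  obtain ⟨hlower, hlog, hn5⟩ := hN n hn
  replace hn5 : (5 : ℝ) ≤ n := by exact_mod_cast hn5
  have hΦ : κ * c ^ (1 / (β + 1)) * (n : ℝ) ^ (β / (β + 1)) = 3 / 4 * critValue β c (2 * n) := by
    rw [critValue_eq_rpow hβ hc (by linarith), Real.mul_rpow hβ.le hc.le,
      Real.mul_rpow zero_le_two (by linarith)]
    ring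
  have hupper := integral_moment_integrand_le_exp_neg_critValue hβ hc (A := 2 * n)
    (m := 2 * n + 1) (by linarith) (by push_cast; linarith)
  specialize hlower (2 * n + 1) (by push_cast; linarith)
  rw [momentT1, mul_assoc, hΦ, neg_mul (κ * _), hΦ,
    show -2 * (3 / 4 * critValue β c (2 * n)) = -(3 / 2 * critValue β c (2 * n)) by ring]
  constructor
  · linarith [Real.exp_pos (-(3 / 2 * critValue β c (2 * n)))]
  · calc 2 * ∫ r in Ioo 0 1, Real.exp (-c * (1 - r) ^ (-β)) * r ^ (2 * n + 1)
        ≤ Real.exp (Real.log 2 - critValue β c (2 * n)) := by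
          rw [sub_eq_add_neg, Real.exp_add, Real.exp_log two_pos]
          linarith
      _ ≤ _ := Real.exp_le_exp.2 (by linarith)
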